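/- Let f : ℤ → ℝ be in BV(ℤ) and M the discrete centered maximal operator. Suppose [a_−, a_+] is a local maximum of Mf with Mf(a) ≠ |f(a)| for every a ∈ [a_−, a_+], and [b_−, b_+] is a local minimum of Mf with b_+ < a_−, and Mf is monotone on [b_+, a_−]. Let r = r_{a_+} be a good radius for f at a_+. Then there exists s ∈ [b_+, a_+ + r] with |f(s)| ≥ Mf(b_+) + (Mf(a_+) − Mf(b_+))·(2r+1)/(2(a_+ − b_+)). -/
import Mathlib


open MeasureTheory Filter Topology Set

/-- The centered discrete average of `|f|` at `n` with radius `r`. -/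
noncomputable def Avg (f : ℤ → ℝ) (n : ℤ) (r : ℕ) : ℝ :=
  (2 * (r : ℝ) + 1)⁻¹ * ∑ k ∈ Finset.Icc (-(r : ℤ)) (r : ℤ), |f (n + k)|

/-- The discrete centered Hardy–Littlewood maximal operator. -/
noncomputable def MD (f : ℤ → ℝ) (n : ℤ) : ℝ :=
  ⨆ r : ℕ, Avg f n r

/-- The total variation of a sequence `f : ℤ → ℝ`. -/
noncomputable def DVar (f : ℤ → ℝ) : ℝ :=
  ∑' n : ℤ, |f (n + 1) - f n|

/-- `f : ℤ → ℝ` has bounded variation (and a limit at `-∞`). -/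
def DBV (f : ℤ → ℝ) : Prop :=
  Summable (fun n : ℤ => |f (n + 1) - f n|) ∧ ∃ L : ℝ, Tendsto f atBot (𝓝 L)

/-- `[x, y]` is a local maximum interval of `g`. -/
def DLocalMax (g : ℤ → ℝ) (x y : ℤ) : Prop :=
  x ≤ y ∧ g (x - 1) < g x ∧ g (y + 1) < g y ∧ ∀ z : ℤ, x ≤ z → z ≤ y → g z = g x

/-- `[x, y]` is a local minimum interval of `g`. -/
def DLocalMin (g : ℤ → ℝ) (x y : ℤ) : Prop :=
  x ≤ y ∧ g x < g (x - 1) ∧ g y < g (y + 1) ∧ ∀ z : ℤ, x ≤ z → z ≤ y → g z = g x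

lemma tele (f : ℤ → ℝ) (m n : ℤ) (h : m ≤ n) :
    f n - f m = ∑ k ∈ Finset.Ico m n, (f (k+1) - f k) := by
  have key : ∀ j : ℕ, f (m + j) - f m = ∑ k ∈ Finset.Ico m (m + j), (f (k+1) - f k) := by
    intro j
    induction j with
    | zero => simp
    | succ j ih =>
      have hins : Finset.Ico m (m + (j+1 : ℕ)) = insert (m + j) (Finset.Ico m (m + j)) := by
        ext x; simp only [Finset.mem_Ico, Finset.mem_insert]; omega
      rw [hins, Finset.sum_insert (by simp)]
      push_cast
      push_cast at ih
      have : m + ((j : ℤ) + 1) = (m + j) + 1 := by ring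
      rw [this]
      linarith
  have h2 := key (n - m).toNat
  rw [show m + ((n-m).toNat : ℤ) = n by omega] at h2
  exact h2

lemma dbv_bounded (f : ℤ → ℝ) (hs : Summable (fun n : ℤ => |f (n + 1) - f n|))
    (L : ℝ) (hL : Tendsto f atBot (𝓝 L)) : ∀ n, |f n| ≤ |L| + ∑' k : ℤ, |f (k+1) - f k| := by
  intro n
  have key : ∀ m, m ≤ n → |f n - f m| ≤ ∑' k : ℤ, |f (k+1) - f k| := by
    intro m hm
    rw [tele f m n hm]
    calc |∑ k ∈ Finset.Ico m n, (f (k+1) - f k)|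
        ≤ ∑ k ∈ Finset.Ico m n, |f (k+1) - f k| := Finset.abs_sum_le_sum_abs _ _
      _ ≤ ∑' k : ℤ, |f (k+1) - f k| := Summable.sum_le_tsum _ (fun i _ => abs_nonneg _) hs
  have hlim : Tendsto (fun m => |f n - f m|) atBot (𝓝 |f n - L|) :=
    (tendsto_const_nhds.sub hL).abs
  have hle : |f n - L| ≤ ∑' k : ℤ, |f (k+1) - f k| :=
    le_of_tendsto hlim (eventually_atBot.mpr ⟨n, fun m hm => key m hm⟩)
  have h2 : |f n| - |L| ≤ |f n - L| := abs_sub_abs_le_abs_sub _ _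
  linarith

lemma sum_shift (f : ℤ → ℝ) (n : ℤ) (r : ℕ) :
    ∑ k ∈ Finset.Icc (-(r:ℤ)) (r:ℤ), |f (n + k)| = ∑ m ∈ Finset.Icc (n - r) (n + r), |f m| := by
  rw [show Finset.Icc (n - (r:ℤ)) (n + r) = Finset.map (addLeftEmbedding n) (Finset.Icc (-(r:ℤ)) r) by
    rw [Finset.map_add_left_Icc, sub_eq_add_neg]]
  rw [Finset.sum_map]
  rfl

lemma avg_le_bound (f : ℤ → ℝ) (C : ℝ) (hC : ∀ m, |f m| ≤ C) (n : ℤ) (k : ℕ) :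
    Avg f n k ≤ C := by
  have hcard : (Finset.Icc (-(k:ℤ)) (k:ℤ)).card = 2 * k + 1 := by
    rw [Int.card_Icc]; omega
  have hsum : ∑ j ∈ Finset.Icc (-(k:ℤ)) (k:ℤ), |f (n + j)| ≤ (2 * (k:ℝ) + 1) * C := by
    have := Finset.sum_le_card_nsmul (Finset.Icc (-(k:ℤ)) (k:ℤ)) (fun j => |f (n + j)|) C
      (fun j _ => hC (n + j))
    rw [hcard] at this
    simpa [nsmul_eq_mul] using this.trans_eq (by push_cast; ring)
  have hpos : (0:ℝ) < 2 * (k:ℝ) + 1 := by positivity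
  rw [Avg, inv_mul_le_iff₀ hpos]
  linarith

theorem statement12
    (f : ℤ → ℝ) (hbv : DBV f)
    (am ap bm bp : ℤ) (r : ℕ)
    (hmax : DLocalMax (MD f) am ap)
    (hne : ∀ a : ℤ, am ≤ a → a ≤ ap → MD f a ≠ |f a|)
    (hmin : DLocalMin (MD f) bm bp)
    (horder : bp < am)
    (hmono : MonotoneOn (MD f) (Set.Icc bp am))
    (hr : MD f ap = Avg f ap r) :
    ∃ s : ℤ, bp ≤ s ∧ s ≤ ap + (r : ℤ) ∧
      MD f bp + (MD f ap - MD f bp) * (2 * (r : ℝ) + 1) / (2 * ((ap : ℝ) - (bp : ℝ)))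
        ≤ |f s| := by
  obtain ⟨hsum, L, hL⟩ := hbv
  set C := |L| + ∑' k : ℤ, |f (k+1) - f k| with hCdef
  have hC : ∀ m, |f m| ≤ C := dbv_bounded f hsum L hL
  have ham : am ≤ ap := hmax.1
  have hba : bp < ap := lt_of_lt_of_le horder ham
  obtain ⟨n, hn⟩ : ∃ n : ℕ, (n:ℤ) = ap - bp := ⟨(ap - bp).toNat, Int.toNat_of_nonneg (by omega)⟩
  have hn1 : 1 ≤ n := by omega
  -- MD f bp ≤ MD f ap
  have hBA : MD f bp ≤ MD f ap := by
    have h1 : MD f bp ≤ MD f am :=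
      hmono ⟨le_rfl, le_of_lt horder⟩ ⟨le_of_lt horder, le_rfl⟩ (le_of_lt horder)
    have h2 : MD f ap = MD f am := hmax.2.2.2 ap ham le_rfl
    linarith
  set A := MD f ap with hA
  set B := MD f bp with hB
  clear_value A B
  -- the maximizing point
  obtain ⟨s, hs, hsmax⟩ := Finset.exists_max_image (Finset.Icc bp (ap + (r:ℤ)))
    (fun m => |f m|) ⟨bp, Finset.mem_Icc.mpr ⟨le_rfl, by omega⟩⟩
  rw [Finset.mem_Icc] at hs
  refine ⟨s, hs.1, hs.2, ?_⟩
  set X := |f s| with hX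
  have hXm : ∀ m : ℤ, bp ≤ m → m ≤ ap + (r:ℤ) → |f m| ≤ X :=
    fun m h1 h2 => hsmax m (Finset.mem_Icc.mpr ⟨h1, h2⟩)
  have hr2 : (0:ℝ) < 2 * (r:ℝ) + 1 := by positivity
  have hSap : ∑ m ∈ Finset.Icc (ap - (r:ℤ)) (ap + (r:ℤ)), |f m| = (2 * (r:ℝ) + 1) * A := by
    rw [← sum_shift, hr, Avg]
    rw [inv_mul_eq_div, mul_comm]
    field_simp
  have hcast : (ap:ℝ) - (bp:ℝ) = (n:ℝ) := by
    have : ((n:ℤ):ℝ) = ((ap - bp : ℤ):ℝ) := by exact_mod_cast congrArg (fun z : ℤ => (z:ℝ)) hn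
    push_cast at this
    linarith
  have hc2 : (0:ℝ) < 2 * ((ap:ℝ) - (bp:ℝ)) := by
    rw [hcast]; positivity
  -- key inequality: (A - B) * (2r+1) ≤ (X - B) * (2n)
  have key : (A - B) * (2 * (r:ℝ) + 1) ≤ (X - B) * (2 * (n:ℝ)) := by
    rcases lt_or_ge r n with hcase | hcase
    · -- window inside [bp, ap + r]
      have hsub : ∑ m ∈ Finset.Icc (ap - (r:ℤ)) (ap + (r:ℤ)), |f m| ≤ (2 * (r:ℝ) + 1) * X := by
        have hcard : (Finset.Icc (ap - (r:ℤ)) (ap + (r:ℤ))).card = 2 * r + 1 := by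
          rw [Int.card_Icc]; omega
        have := Finset.sum_le_card_nsmul (Finset.Icc (ap - (r:ℤ)) (ap + (r:ℤ)))
          (fun m => |f m|) X (fun m hm => by
            rw [Finset.mem_Icc] at hm
            exact hXm m (by omega) (by omega))
        rw [hcard] at this
        simpa [nsmul_eq_mul] using this.trans_eq (by push_cast; ring)
      have hAX : A ≤ X := by
        rw [hSap] at hsub
        exact le_of_mul_le_mul_left (by linarith) hr2
      have hrn : (r:ℝ) + 1 ≤ (n:ℝ) := by exact_mod_cast hcase
      nlinarith [mul_nonneg (sub_nonneg.mpr hBA) (show (0:ℝ) ≤ 2*(n:ℝ) - (2*(r:ℝ)+1) by linarith),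
        mul_nonneg (sub_nonneg.mpr hAX) (show (0:ℝ) ≤ 2*(n:ℝ) by positivity)]
    · -- window sticks out to the left of bp
      set d : ℕ := r - n with hd
      have hdz : (d:ℤ) = (r:ℤ) - (ap - bp) := by omega
      have hbpd : bp - (d:ℤ) = ap - (r:ℤ) := by omega
      -- bound the left chunk by the maximal function at bp
      have havg : Avg f bp d ≤ B := by
        rw [hB, MD]
        exact le_ciSup ⟨C, by rintro x ⟨k, rfl⟩; exact avg_le_bound f C hC bp k⟩ d
      have hd2 : (0:ℝ) < 2 * (d:ℝ) + 1 := by positivity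
      have hSb : ∑ m ∈ Finset.Icc (bp - (d:ℤ)) (bp + (d:ℤ)), |f m| ≤ (2 * (d:ℝ) + 1) * B := by
        rw [← sum_shift]
        rw [Avg, inv_mul_le_iff₀ hd2] at havg
        linarith
      -- split the window
      have hsplit : Finset.Icc (ap - (r:ℤ)) (ap + (r:ℤ)) =
          Finset.Icc (bp - (d:ℤ)) (bp + (d:ℤ)) ∪ Finset.Ioc (bp + (d:ℤ)) (ap + (r:ℤ)) := by
        ext x
        simp only [Finset.mem_Icc, Finset.mem_union, Finset.mem_Ioc]
        omega
      have hdisj : Disjoint (Finset.Icc (bp - (d:ℤ)) (bp + (d:ℤ)))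
          (Finset.Ioc (bp + (d:ℤ)) (ap + (r:ℤ))) := by
        rw [Finset.disjoint_left]
        intro x hx hx'
        rw [Finset.mem_Icc] at hx
        rw [Finset.mem_Ioc] at hx'
        omega
      have hS2 : ∑ m ∈ Finset.Ioc (bp + (d:ℤ)) (ap + (r:ℤ)), |f m| ≤ (2 * (n:ℝ)) * X := by
        have hcard : (Finset.Ioc (bp + (d:ℤ)) (ap + (r:ℤ))).card = 2 * n := by
          rw [Int.card_Ioc]; omega
        have := Finset.sum_le_card_nsmul (Finset.Ioc (bp + (d:ℤ)) (ap + (r:ℤ)))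
          (fun m => |f m|) X (fun m hm => by
            rw [Finset.mem_Ioc] at hm
            exact hXm m (by omega) (by omega))
        rw [hcard] at this
        simpa [nsmul_eq_mul] using this.trans_eq (by push_cast; ring)
      have htot : (2 * (r:ℝ) + 1) * A ≤ (2 * (d:ℝ) + 1) * B + (2 * (n:ℝ)) * X := by
        rw [← hSap, hsplit, Finset.sum_union hdisj]
        linarith
      have hdn : (d:ℝ) = (r:ℝ) - (n:ℝ) := by
        rw [hd]
        push_cast [Nat.cast_sub hcase]
        ring
      rw [hdn] at htot
      nlinarith [htot]
  have final : (A - B) * (2 * (r:ℝ) + 1) / (2 * ((ap:ℝ) - (bp:ℝ))) ≤ X - B := by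
    rw [div_le_iff₀ hc2, hcast]
    linarith
  linarith
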